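/- arXiv:1209.5154 — 3 statements merged into one kernel-verified Lean document; each statement's English description precedes it below -/
import Mathlib

section
/- Let H be a complex Hilbert space and let Δ : B(H) → B(H) be a 2-local derivation, i.e., for every pair x, y ∈ B(H) there exists a ℂ-linear map D : B(H) → B(H) satisfying D(a b) = D(a) b + a D(b) for all a, b ∈ B(H), such that Δ(x) = D(x) and Δ(y) = D(y). Then the restriction of Δ to the ideal of finite-rank operators is additive: Δ(u + v) = Δ(u) + Δ(v) for all finite-rank operators u, v ∈ B(H). -/
/-!
Let `tr` be the trace of finite-rank operators. For a derivation `D`,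
`tr (D (a * b)) = tr (D (b * a))` whenever `a, b` have finite rank, and `tr (D p) = 0` for a
finite-rank idempotent `p`, because Leibniz applied to `p = p * p` gives `p * D p * p = 0`.
A rank-one operator `e = φ.smulRight ξ` factors as `e = e * p` with `p * e = φ ξ • p` for a
rank-one idempotent `p`, hence `tr (D e) = 0`. Applied to `x * e = φ.smulRight (x ξ)` this yields
`φ (D x ξ) = -tr (x * D e)`. For a 2-local derivation `Δ`, choosing `D` for the pair `(x, e)`
gives `φ (Δ x ξ) = -tr (x * Δ e)`, which is additive in `x`; as the continuous functionals
separate points, `Δ` is additive.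
-/

namespace LinearMap

variable {K M : Type*} [Field K] [AddCommGroup M] [Module K M]

/-- When `range f` is not finite-dimensional this is the junk value `0`. -/
noncomputable def finiteRangeTrace (f : M →ₗ[K] M) : K :=
  trace K (range f) (f.restrict fun x _ => mem_range_self f x)

theorem finiteRangeTrace_eq_trace_restrict {f : M →ₗ[K] M} {V : Submodule K M}
    [FiniteDimensional K V] (hV : range f ≤ V) :
    finiteRangeTrace f = trace K V (f.restrict fun x _ => hV (mem_range_self f x)) := by
  have := Submodule.finiteDimensional_of_le hV
  exact trace_comp_comm' (Submodule.inclusion hV) (f.rangeRestrict ∘ₗ V.subtype)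

theorem finiteRangeTrace_add {f g : M →ₗ[K] M} (hf : f.HasFiniteRange) (hg : g.HasFiniteRange) :
    finiteRangeTrace (f + g) = finiteRangeTrace f + finiteRangeTrace g := by
  have : FiniteDimensional K ↥(f.range ⊔ g.range) := Module.Finite.iff_fg.2 (hf.sup hg)
  rw [finiteRangeTrace_eq_trace_restrict (range_add_le f g),
    finiteRangeTrace_eq_trace_restrict (le_sup_left : f.range ≤ f.range ⊔ g.range),
    finiteRangeTrace_eq_trace_restrict (le_sup_right : g.range ≤ f.range ⊔ g.range), ← map_add]
  rfl

theorem finiteRangeTrace_smul {f : M →ₗ[K] M} (hf : f.HasFiniteRange) (c : K) :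
    finiteRangeTrace (c • f) = c * finiteRangeTrace f := by
  have : FiniteDimensional K f.range := Module.Finite.iff_fg.2 hf
  rw [finiteRangeTrace_eq_trace_restrict (range_smul_le_range f c)]
  exact map_smul (trace K f.range) c (f.restrict _)

theorem finiteRangeTrace_mul_comm {f : M →ₗ[K] M} (hf : f.HasFiniteRange) (a : M →ₗ[K] M) :
    finiteRangeTrace (a * f) = finiteRangeTrace (f * a) := by
  have : FiniteDimensional K f.range := Module.Finite.iff_fg.2 hf
  have : FiniteDimensional K (f.range.map a) := Module.Finite.map _ _
  rw [Module.End.mul_eq_comp, Module.End.mul_eq_comp,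
    finiteRangeTrace_eq_trace_restrict (range_comp f a).le,
    finiteRangeTrace_eq_trace_restrict (range_comp_le_range a f)]
  exact trace_comp_comm' (f.rangeRestrict ∘ₗ (f.range.map a).subtype)
    (a.restrict fun _ hx => Submodule.mem_map_of_mem hx)

theorem finiteRangeTrace_smulRight (φ : M →ₗ[K] K) (ξ : M) :
    finiteRangeTrace (φ.smulRight ξ) = φ ξ := by
  have hV : range (φ.smulRight ξ) ≤ K ∙ ξ := by
    rintro _ ⟨y, rfl⟩
    exact Submodule.smul_mem _ _ (Submodule.mem_span_singleton_self ξ)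
  rw [finiteRangeTrace_eq_trace_restrict hV]
  exact trace_smulRight (φ ∘ₗ (K ∙ ξ).subtype) ⟨ξ, Submodule.mem_span_singleton_self ξ⟩

theorem hasFiniteRange_smulRight (φ : M →ₗ[K] K) (ξ : M) : (φ.smulRight ξ).HasFiniteRange := by
  have : φ.smulRight ξ = toSpanSingleton K M ξ ∘ₗ φ := by ext; simp
  exact this ▸ HasFiniteRange.of_isNoetherian_rng.comp_left _

@[simp]
theorem finiteRangeTrace_zero : finiteRangeTrace (0 : M →ₗ[K] M) = 0 :=
  map_zero (trace K _)

theorem HasFiniteRange.mul_left {f : M →ₗ[K] M} (hf : f.HasFiniteRange) (a : M →ₗ[K] M) :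
    (a * f).HasFiniteRange :=
  hf.comp_left a

theorem HasFiniteRange.mul_right {f : M →ₗ[K] M} (hf : f.HasFiniteRange) (a : M →ₗ[K] M) :
    (f * a).HasFiniteRange :=
  hf.comp_right a

end LinearMap

open LinearMap (finiteRangeTrace HasFiniteRange finiteRangeTrace_add finiteRangeTrace_smul
  finiteRangeTrace_mul_comm finiteRangeTrace_smulRight finiteRangeTrace_zero)

namespace ContinuousLinearMap

variable {𝕜 E : Type*} [Field 𝕜] [TopologicalSpace 𝕜] [AddCommGroup E] [TopologicalSpace E]
  [Module 𝕜 E] [ContinuousSMul 𝕜 E]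

theorem smulRight_mul_smulRight (φ ψ : E →L[𝕜] 𝕜) (ξ ζ : E) :
    φ.smulRight ξ * ψ.smulRight ζ = φ ζ • ψ.smulRight ξ := by
  ext; simp [smul_smul, mul_comm]

theorem mul_smulRight (a : E →L[𝕜] E) (φ : E →L[𝕜] 𝕜) (ξ : E) :
    a * φ.smulRight ξ = φ.smulRight (a ξ) := by
  ext; simp

theorem toLinearMap_smulRight (φ : E →L[𝕜] 𝕜) (ξ : E) :
    (φ.smulRight ξ : E →ₗ[𝕜] E) = (φ : E →ₗ[𝕜] 𝕜).smulRight ξ :=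
  rfl

theorem hasFiniteRange_smulRight (φ : E →L[𝕜] 𝕜) (ξ : E) :
    (φ.smulRight ξ : E →ₗ[𝕜] E).HasFiniteRange :=
  LinearMap.hasFiniteRange_smulRight (φ : E →ₗ[𝕜] 𝕜) ξ

theorem finiteRangeTrace_mul_smulRight (a : E →L[𝕜] E) (φ : E →L[𝕜] 𝕜) (ξ : E) :
    finiteRangeTrace ((a : E →ₗ[𝕜] E) * (φ.smulRight ξ : E →ₗ[𝕜] E)) = φ (a ξ) := by
  rw [← toLinearMap_mul, mul_smulRight, toLinearMap_smulRight, finiteRangeTrace_smulRight, coe_coe]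

variable [IsTopologicalAddGroup E]

theorem exists_idempotent_smulRight_mul_eq_self (φ : E →L[𝕜] 𝕜) (ξ : E) :
    ∃ p : E →L[𝕜] E, (p : E →ₗ[𝕜] E).HasFiniteRange ∧ IsIdempotentElem p ∧
      φ.smulRight ξ * p = φ.smulRight ξ ∧ p * φ.smulRight ξ = φ ξ • p := by
  by_cases hφ : φ = 0
  · exact ⟨0, HasFiniteRange.zero, .zero, by simp [hφ], by simp⟩
  obtain ⟨e, he⟩ : ∃ e, φ e = 1 := by
    obtain ⟨x, hx⟩ := DFunLike.ne_iff.1 hφ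
    exact ⟨(φ x)⁻¹ • x, by simp [inv_mul_cancel₀ hx]⟩
  refine ⟨φ.smulRight e, hasFiniteRange_smulRight φ e, ?_, ?_, ?_⟩ <;>
    simp [IsIdempotentElem, smulRight_mul_smulRight, he]

section Derivation

variable {D : (E →L[𝕜] E) →ₗ[𝕜] (E →L[𝕜] E)} (hD : ∀ a b, D (a * b) = D a * b + a * D b)
include hD

theorem hasFiniteRange_derivation_mul {a b : E →L[𝕜] E} (ha : (a : E →ₗ[𝕜] E).HasFiniteRange)
    (hb : (b : E →ₗ[𝕜] E).HasFiniteRange) : (D (a * b) : E →ₗ[𝕜] E).HasFiniteRange := by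
  rw [hD]
  exact (hb.mul_left (D a : E →ₗ[𝕜] E)).add (ha.mul_right (D b : E →ₗ[𝕜] E))

theorem finiteRangeTrace_derivation_mul_comm {a b : E →L[𝕜] E}
    (ha : (a : E →ₗ[𝕜] E).HasFiniteRange) (hb : (b : E →ₗ[𝕜] E).HasFiniteRange) :
    finiteRangeTrace (D (a * b) : E →ₗ[𝕜] E) = finiteRangeTrace (D (b * a) : E →ₗ[𝕜] E) := by
  simp only [hD, toLinearMap_add, toLinearMap_mul]
  rw [finiteRangeTrace_add (hb.mul_left _) (ha.mul_right _),
    finiteRangeTrace_add (ha.mul_left _) (hb.mul_right _),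
    finiteRangeTrace_mul_comm hb, finiteRangeTrace_mul_comm ha, add_comm]

theorem hasFiniteRange_derivation_of_isIdempotentElem {p : E →L[𝕜] E}
    (hp : (p : E →ₗ[𝕜] E).HasFiniteRange) (hpp : IsIdempotentElem p) :
    (D p : E →ₗ[𝕜] E).HasFiniteRange :=
  hpp.eq ▸ hasFiniteRange_derivation_mul hD hp hp

theorem finiteRangeTrace_derivation_of_isIdempotentElem {p : E →L[𝕜] E}
    (hp : (p : E →ₗ[𝕜] E).HasFiniteRange) (hpp : IsIdempotentElem p) :
    finiteRangeTrace (D p : E →ₗ[𝕜] E) = 0 := by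
  have hDp : D p = D p * p + p * D p := by rw [← hD, hpp.eq]
  have hpDpp : p * D p * p = 0 := by
    have : p * D p * p = p * D p * p + p * D p * p := by
      conv_lhs => rw [hDp]
      simp only [mul_add, add_mul, mul_assoc, hpp.eq]
      rw [← mul_assoc p p, hpp.eq]
    exact left_eq_add.mp this
  have hpDp : finiteRangeTrace (p * D p : E →ₗ[𝕜] E) = 0 := by
    have : (p : E →ₗ[𝕜] E) * D p = p * ↑(p * D p) := by
      rw [← toLinearMap_mul, ← toLinearMap_mul, ← mul_assoc, hpp.eq]
    rw [this, ← finiteRangeTrace_mul_comm hp, ← toLinearMap_mul, hpDpp, toLinearMap_zero,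
      finiteRangeTrace_zero]
  rw [hDp, toLinearMap_add, toLinearMap_mul, toLinearMap_mul,
    finiteRangeTrace_add (hp.mul_left _) (hp.mul_right _), finiteRangeTrace_mul_comm hp, hpDp,
    add_zero]

theorem hasFiniteRange_derivation_smulRight (φ : E →L[𝕜] 𝕜) (ξ : E) :
    (D (φ.smulRight ξ) : E →ₗ[𝕜] E).HasFiniteRange := by
  obtain ⟨p, hp, -, hep, -⟩ := exists_idempotent_smulRight_mul_eq_self φ ξ
  rw [← hep]
  exact hasFiniteRange_derivation_mul hD (hasFiniteRange_smulRight φ ξ) hp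

theorem finiteRangeTrace_derivation_smulRight (φ : E →L[𝕜] 𝕜) (ξ : E) :
    finiteRangeTrace (D (φ.smulRight ξ) : E →ₗ[𝕜] E) = 0 := by
  obtain ⟨p, hp, hpp, hep, hpe⟩ := exists_idempotent_smulRight_mul_eq_self φ ξ
  rw [← hep, finiteRangeTrace_derivation_mul_comm hD (hasFiniteRange_smulRight φ ξ) hp, hpe,
    map_smul, toLinearMap_smul,
    finiteRangeTrace_smul (hasFiniteRange_derivation_of_isIdempotentElem hD hp hpp),
    finiteRangeTrace_derivation_of_isIdempotentElem hD hp hpp, mul_zero]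

theorem dual_derivation_apply_eq_neg_finiteRangeTrace (x : E →L[𝕜] E) (φ : E →L[𝕜] 𝕜) (ξ : E) :
    φ (D x ξ) = -finiteRangeTrace ((x : E →ₗ[𝕜] E) * (D (φ.smulRight ξ) : E →ₗ[𝕜] E)) := by
  have h := finiteRangeTrace_derivation_smulRight hD φ (x ξ)
  rw [← mul_smulRight, hD, toLinearMap_add, toLinearMap_mul, toLinearMap_mul,
    finiteRangeTrace_add ((hasFiniteRange_smulRight φ ξ).mul_left _)
      ((hasFiniteRange_derivation_smulRight hD φ ξ).mul_left _),
    finiteRangeTrace_mul_smulRight] at h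
  linear_combination h

end Derivation

def IsTwoLocalDerivation (Δ : (E →L[𝕜] E) → E →L[𝕜] E) : Prop :=
  ∀ x y, ∃ D : (E →L[𝕜] E) →ₗ[𝕜] E →L[𝕜] E,
    (∀ a b, D (a * b) = D a * b + a * D b) ∧ Δ x = D x ∧ Δ y = D y

theorem IsTwoLocalDerivation.map_add [SeparatingDual 𝕜 E] {Δ : (E →L[𝕜] E) → E →L[𝕜] E}
    (hΔ : IsTwoLocalDerivation Δ) (u v : E →L[𝕜] E) : Δ (u + v) = Δ u + Δ v := by
  have hrange (φ : E →L[𝕜] 𝕜) (ξ : E) : (Δ (φ.smulRight ξ) : E →ₗ[𝕜] E).HasFiniteRange := by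
    obtain ⟨D, hD, h, -⟩ := hΔ (φ.smulRight ξ) (φ.smulRight ξ)
    exact h ▸ hasFiniteRange_derivation_smulRight hD φ ξ
  have hdual (x : E →L[𝕜] E) (φ : E →L[𝕜] 𝕜) (ξ : E) :
      φ (Δ x ξ) = -finiteRangeTrace ((x : E →ₗ[𝕜] E) * (Δ (φ.smulRight ξ) : E →ₗ[𝕜] E)) := by
    obtain ⟨D, hD, hx, he⟩ := hΔ x (φ.smulRight ξ)
    rw [hx, he]
    exact dual_derivation_apply_eq_neg_finiteRangeTrace hD x φ ξ
  ext ξ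
  refine (SeparatingDual.eq_iff_forall_dual_eq (R := 𝕜)).2 fun φ => ?_
  rw [add_apply, _root_.map_add, hdual, hdual, hdual, toLinearMap_add, add_mul,
    finiteRangeTrace_add ((hrange φ ξ).mul_left _) ((hrange φ ξ).mul_left _), neg_add]

end ContinuousLinearMap

theorem twoLocalDerivation_additive_on_finiteRank_general
    {H : Type*} [NormedAddCommGroup H] [InnerProductSpace ℂ H]
    (Δ : (H →L[ℂ] H) → (H →L[ℂ] H))
    (h : ∀ x y : H →L[ℂ] H, ∃ D : (H →L[ℂ] H) →ₗ[ℂ] (H →L[ℂ] H),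
      (∀ a b : H →L[ℂ] H, D (a * b) = D a * b + a * D b) ∧
      Δ x = D x ∧ Δ y = D y) :
    ∀ u v : H →L[ℂ] H,
      FiniteDimensional ℂ (LinearMap.range (u : H →ₗ[ℂ] H)) →
      FiniteDimensional ℂ (LinearMap.range (v : H →ₗ[ℂ] H)) →
      Δ (u + v) = Δ u + Δ v :=
  fun u v _ _ => ContinuousLinearMap.IsTwoLocalDerivation.map_add h u v

/-- A 2-local derivation on B(H) is additive on the ideal of finite-rank operators. -/
theorem twoLocalDerivation_additive_on_finiteRank
    {H : Type*} [NormedAddCommGroup H] [InnerProductSpace ℂ H] [CompleteSpace H]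
    (Δ : (H →L[ℂ] H) → (H →L[ℂ] H))
    (h : ∀ x y : H →L[ℂ] H, ∃ D : (H →L[ℂ] H) →ₗ[ℂ] (H →L[ℂ] H),
      (∀ a b : H →L[ℂ] H, D (a * b) = D a * b + a * D b) ∧
      Δ x = D x ∧ Δ y = D y) :
    ∀ u v : H →L[ℂ] H,
      FiniteDimensional ℂ (LinearMap.range (u : H →ₗ[ℂ] H)) →
      FiniteDimensional ℂ (LinearMap.range (v : H →ₗ[ℂ] H)) →
      Δ (u + v) = Δ u + Δ v :=
  twoLocalDerivation_additive_on_finiteRank_general Δ h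
end

section
/- Let H be a complex Hilbert space and let Δ : B(H) → B(H) be a 2-local derivation, i.e., for every pair x, y ∈ B(H) there exists a ℂ-linear map D : B(H) → B(H) satisfying D(a b) = D(a) b + a D(b) for all a, b ∈ B(H), such that Δ(x) = D(x) and Δ(y) = D(y). If Δ(x) = 0 for every finite-rank operator x ∈ B(H), then Δ(x) = 0 for all x ∈ B(H). -/
/-! For a rank-one operator `y = |ξ⟩⟨η|`, pick a derivation `D` agreeing with `Δ` at `x` and `y`;
then `D y = 0`, and since `y x y` is a scalar multiple of `y`, the Leibniz rule gives
`y (Δ x) y = D (y x y) = 0`. Taking `η = (Δ x) ξ` turns this into `‖(Δ x) ξ‖² |ξ⟩⟨(Δ x) ξ| = 0`,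
so `(Δ x) ξ = 0`. -/

open InnerProductSpace

theorem map_mul_mul_eq_mul_map_mul_of_map_eq_zero {A : Type*} [NonUnitalSemiring A]
    {D : A → A} (hD : ∀ a b, D (a * b) = D a * b + a * D b) {y : A} (hy : D y = 0) (x : A) :
    D (y * x * y) = y * D x * y := by
  rw [hD, hD, hy, zero_mul, zero_add, mul_zero, add_zero]

section RankOne

variable {𝕜 E : Type*} [RCLike 𝕜]

theorem rankOne_mul_mul_rankOne [SeminormedAddCommGroup E] [InnerProductSpace 𝕜 E]
    (x y : E) (T : E →L[𝕜] E) :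
    rankOne 𝕜 x y * T * rankOne 𝕜 x y = inner 𝕜 y (T x) • rankOne 𝕜 x y := by
  rw [ContinuousLinearMap.mul_def, ContinuousLinearMap.mul_def, ContinuousLinearMap.comp_assoc,
    comp_rankOne, rankOne_comp_rankOne]

theorem finiteDimensional_range_rankOne [SeminormedAddCommGroup E] [InnerProductSpace 𝕜 E]
    (x y : E) : FiniteDimensional 𝕜 (LinearMap.range (rankOne 𝕜 x y : E →ₗ[𝕜] E)) := by
  refine Submodule.finiteDimensional_of_le (S₂ := 𝕜 ∙ x) ?_
  rintro _ ⟨z, rfl⟩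
  exact Submodule.smul_mem _ _ (Submodule.mem_span_singleton_self x)

theorem ContinuousLinearMap.eq_zero_of_forall_rankOne_mul_mul_rankOne_eq_zero
    [NormedAddCommGroup E] [InnerProductSpace 𝕜 E] {T : E →L[𝕜] E}
    (hT : ∀ x y : E, rankOne 𝕜 x y * T * rankOne 𝕜 x y = 0) : T = 0 := by
  ext x
  have hx := hT x (T x)
  rw [rankOne_mul_mul_rankOne, smul_eq_zero, inner_self_eq_zero, rankOne_eq_zero] at hx
  rcases hx with hTx | rfl | hTx
  · exact hTx
  · exact map_zero T
  · exact hTx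

end RankOne

theorem twoLocalDerivation_vanishing_on_finiteRank_general
    {H : Type*} [NormedAddCommGroup H] [InnerProductSpace ℂ H]
    (Δ : (H →L[ℂ] H) → (H →L[ℂ] H))
    (h : ∀ x y : H →L[ℂ] H, ∃ D : (H →L[ℂ] H) →ₗ[ℂ] (H →L[ℂ] H),
      (∀ a b : H →L[ℂ] H, D (a * b) = D a * b + a * D b) ∧
      Δ x = D x ∧ Δ y = D y)
    (hfin : ∀ x : H →L[ℂ] H,
      FiniteDimensional ℂ (LinearMap.range (x : H →ₗ[ℂ] H)) → Δ x = 0) :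
    ∀ x : H →L[ℂ] H, Δ x = 0 := by
  intro x
  refine ContinuousLinearMap.eq_zero_of_forall_rankOne_mul_mul_rankOne_eq_zero fun ξ η => ?_
  set y := rankOne ℂ ξ η
  obtain ⟨D, hD, hDx, hDy⟩ := h x y
  have hDy0 : D y = 0 := hDy ▸ hfin y (finiteDimensional_range_rankOne ξ η)
  calc y * Δ x * y = y * D x * y := by rw [hDx]
    _ = D (y * x * y) := (map_mul_mul_eq_mul_map_mul_of_map_eq_zero hD hDy0 x).symm
    _ = 0 := by rw [rankOne_mul_mul_rankOne, map_smul, hDy0, smul_zero]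

/-- A 2-local derivation on B(H) vanishing on all finite-rank operators vanishes. -/
theorem twoLocalDerivation_vanishing_on_finiteRank
    {H : Type*} [NormedAddCommGroup H] [InnerProductSpace ℂ H] [CompleteSpace H]
    (Δ : (H →L[ℂ] H) → (H →L[ℂ] H))
    (h : ∀ x y : H →L[ℂ] H, ∃ D : (H →L[ℂ] H) →ₗ[ℂ] (H →L[ℂ] H),
      (∀ a b : H →L[ℂ] H, D (a * b) = D a * b + a * D b) ∧
      Δ x = D x ∧ Δ y = D y)
    (hfin : ∀ x : H →L[ℂ] H,
      FiniteDimensional ℂ (LinearMap.range (x : H →ₗ[ℂ] H)) → Δ x = 0) :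
    ∀ x : H →L[ℂ] H, Δ x = 0 :=
  twoLocalDerivation_vanishing_on_finiteRank_general Δ h hfin
end

section
/- Let H be an infinite-dimensional complex Hilbert space and let Δ : B(H) → B(H) be a 2-local derivation, i.e., for every pair x, y ∈ B(H) there exists a ℂ-linear map D : B(H) → B(H) satisfying D(a b) = D(a) b + a D(b) for all a, b ∈ B(H), such that Δ(x) = D(x) and Δ(y) = D(y). Then Δ is a derivation; in fact Δ is inner: there exists an operator a ∈ B(H) such that Δ(x) = a x − x a for all x ∈ B(H). -/
/-!
Write `η ⊗ ζ` for the rank-one operator `rankOne ℂ η ζ = ⟪ζ, ·⟫ • η` and fix a unit vector `ξ`.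

A derivation `D` of `B(H)` is the commutator with the linear map `T η = D (η ⊗ ξ) ξ` (apply the
Leibniz rule to `z * (η ⊗ ξ)`), and `T` is bounded by the closed graph theorem. So `Δ` is a 2-local
*inner* derivation `Φ`.

If `Φ z = [a, z]` and `Φ (η ⊗ ζ) = [a₀, η ⊗ ζ]`, then `a - a₀` commutes with `η ⊗ ζ`, hence acts
as a scalar on the corner `(ζ, η)`, and `⟪ζ, Φ z η⟫ = ⟪ζ, [a₀, z] η⟫`; so `Φ` is linear. After
subtracting an inner derivation, `Φ (ξ ⊗ ξ) = 0`, and cutting down by the projection `ξ ⊗ ξ` shows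
that `Φ z - [B, z]` kills `ξ` and has range orthogonal to `ξ`, where `B η = Φ (η ⊗ ξ) ξ`. The same
corner argument with the unbounded `B` in place of `a₀` gives `⟪ζ, Φ z η⟫ = ⟪ζ, [B, z] η⟫` when
`⟪ξ, η⟫ ≠ 0 ≠ ⟪ζ, ξ⟫`, hence everywhere by linearity, and `B` is bounded as before.
-/

open InnerProductSpace ContinuousLinearMap
open scoped InnerProductSpace

section

variable {𝕜 E F : Type*} [RCLike 𝕜] [NormedAddCommGroup E] [NormedSpace 𝕜 E]
  [NormedAddCommGroup F] [InnerProductSpace 𝕜 F]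

theorem LinearMap.continuous_of_continuous_inner [CompleteSpace E] [CompleteSpace F]
    (T : E →ₗ[𝕜] F) (h : ∀ ζ, Continuous fun x => ⟪ζ, T x⟫_𝕜) : Continuous T := by
  refine T.continuous_of_isClosed_graph ?_
  have hgraph : (T.graph : Set (E × F)) = ⋂ ζ, {p | ⟪ζ, p.2⟫_𝕜 = ⟪ζ, T p.1⟫_𝕜} := by
    ext p
    simp [LinearMap.mem_graph_iff, ← ext_iff_inner_left 𝕜]
  rw [hgraph]
  exact isClosed_iInter fun ζ => isClosed_eq (by fun_prop) ((h ζ).comp continuous_fst)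

theorem LinearMap.eq_zero_of_forall_inner_ne_zero {M : Type*} [AddCommGroup M] [Module 𝕜 M]
    {ξ : F} (hξ : ξ ≠ 0) (f : F →ₗ[𝕜] M) (h : ∀ v, ⟪ξ, v⟫_𝕜 ≠ 0 → f v = 0) : f = 0 := by
  have hξξ : ⟪ξ, ξ⟫_𝕜 ≠ 0 := inner_self_ne_zero.2 hξ
  ext v
  by_cases hv : ⟪ξ, v⟫_𝕜 = 0
  · have hvξ := h (v + ξ) (by rwa [inner_add_right, hv, zero_add])
    rwa [_root_.map_add, h ξ hξξ, add_zero] at hvξ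
  · exact h v hv

end

section

variable {H : Type*} [NormedAddCommGroup H] [InnerProductSpace ℂ H]

theorem LinearMap.continuous_of_continuous_commutator [CompleteSpace H] (T : H →ₗ[ℂ] H)
    (h : ∀ z : H →L[ℂ] H, Continuous fun v => T (z v) - z (T v)) : Continuous T := by
  rcases subsingleton_or_nontrivial H with _ | _
  · exact continuous_of_const fun x y => congrArg T (Subsingleton.elim x y)
  obtain ⟨ξ, hξ⟩ := exists_norm_eq H zero_le_one
  refine T.continuous_of_continuous_inner fun ζ => ?_
  -- `[T, ξ ⊗ ζ] v = ⟪ζ, v⟫ • T ξ - ⟪ζ, T v⟫ • ξ`, and the left side is continuous in `v`.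
  have hcoeff : ∀ v, ⟪ζ, T v⟫_ℂ
      = ⟪ξ, ⟪ζ, v⟫_ℂ • T ξ - (T (rankOne ℂ ξ ζ v) - rankOne ℂ ξ ζ (T v))⟫_ℂ := by
    intro v
    simp [hξ]
  simp_rw [hcoeff]
  have := h (rankOne ℂ ξ ζ)
  fun_prop

theorem exists_eq_commutator_of_apply_eq [CompleteSpace H] {Φ : (H →L[ℂ] H) → (H →L[ℂ] H)}
    (T : H →ₗ[ℂ] H) (hT : ∀ z v, Φ z v = T (z v) - z (T v)) :
    ∃ a : H →L[ℂ] H, ∀ z, Φ z = a * z - z * a := by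
  have hcont : Continuous T := T.continuous_of_continuous_commutator fun z => by
    simpa only [← hT] using (Φ z).continuous
  exact ⟨⟨T, hcont⟩, fun z => ext fun v => hT z v⟩

theorem exists_eq_commutator_of_derivation [CompleteSpace H]
    (D : (H →L[ℂ] H) →ₗ[ℂ] (H →L[ℂ] H)) (hD : ∀ a b, D (a * b) = D a * b + a * D b) :
    ∃ a : H →L[ℂ] H, ∀ x, D x = a * x - x * a := by
  rcases subsingleton_or_nontrivial H with _ | _
  · exact ⟨0, fun _ => Subsingleton.elim _ _⟩
  obtain ⟨ξ, hξ⟩ := exists_norm_eq H zero_le_one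
  let T : H →ₗ[ℂ] H :=
    (apply ℂ H ξ).toLinearMap ∘ₗ D ∘ₗ ((rankOne ℂ).flip ξ).toLinearMap
  refine exists_eq_commutator_of_apply_eq T fun z v => ?_
  have hleib := congr($(hD z (rankOne ℂ v ξ)) ξ)
  rw [mul_def, comp_rankOne] at hleib
  simp [T, hleib, hξ]

/-- `h₁` forces `d η = μ • η` and then `h₂` forces `⟪ζ, d w⟫ = μ * ⟪ζ, w⟫`: `d` acts on the corner
`(ζ, η)` as the scalar `μ`. -/
theorem inner_apply_eq_of_commute_rankOne (d : H →ₗ[ℂ] H) {η ζ w₀ u₀ : H}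
    (hw₀ : ⟪ζ, w₀⟫_ℂ ≠ 0) (hu₀ : ⟪u₀, η⟫_ℂ ≠ 0)
    (h₁ : d (rankOne ℂ η ζ w₀) = rankOne ℂ η ζ (d w₀))
    (h₂ : ∀ w, ⟪u₀, d (rankOne ℂ η ζ w)⟫_ℂ = ⟪u₀, rankOne ℂ η ζ (d w)⟫_ℂ)
    (z : H →L[ℂ] H) : ⟪ζ, d (z η)⟫_ℂ = ⟪ζ, z (d η)⟫_ℂ := by
  simp only [rankOne_apply, map_smul] at h₁
  obtain ⟨μ, hη⟩ : ∃ μ : ℂ, d η = μ • η :=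
    ⟨_, by rw [← inv_smul_smul₀ hw₀ (d η), h₁, smul_smul]⟩
  have hζ : ∀ w, ⟪ζ, d w⟫_ℂ = μ * ⟪ζ, w⟫_ℂ := fun w => by
    have := h₂ w
    simp only [rankOne_apply, map_smul, hη, inner_smul_right] at this
    exact mul_right_cancel₀ hu₀ (by linear_combination -this)
  rw [hζ, hη, map_smul, inner_smul_right]

def IsTwoLocalInnerDerivation (Φ : (H →L[ℂ] H) → (H →L[ℂ] H)) : Prop :=
  ∀ x y, ∃ a : H →L[ℂ] H, Φ x = a * x - x * a ∧ Φ y = a * y - y * a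

namespace IsTwoLocalInnerDerivation

variable {Φ : (H →L[ℂ] H) → (H →L[ℂ] H)} (hΦ : IsTwoLocalInnerDerivation Φ)
include hΦ

theorem inner_apply_eq (T : H →ₗ[ℂ] H) {η ζ w₀ u₀ : H}
    (hw₀ : ⟪ζ, w₀⟫_ℂ ≠ 0) (hu₀ : ⟪u₀, η⟫_ℂ ≠ 0)
    (h₁ : Φ (rankOne ℂ η ζ) w₀ = T (rankOne ℂ η ζ w₀) - rankOne ℂ η ζ (T w₀))
    (h₂ : ∀ w, ⟪u₀, Φ (rankOne ℂ η ζ) w⟫_ℂ = ⟪u₀, T (rankOne ℂ η ζ w) - rankOne ℂ η ζ (T w)⟫_ℂ)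
    (z : H →L[ℂ] H) : ⟪ζ, Φ z η⟫_ℂ = ⟪ζ, T (z η) - z (T η)⟫_ℂ := by
  obtain ⟨a, hz, hr⟩ := hΦ z (rankOne ℂ η ζ)
  simp only [hr, sub_apply, mul_apply_eq_comp] at h₁ h₂
  have hcorner := inner_apply_eq_of_commute_rankOne (a.toLinearMap - T) hw₀ hu₀
    (by simpa only [LinearMap.sub_apply, coe_coe, map_sub, sub_eq_sub_iff_sub_eq_sub] using h₁)
    (fun w => by
      have := h₂ w
      simp only [LinearMap.sub_apply, coe_coe, map_sub, inner_sub_right] at this ⊢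
      linear_combination this) z
  simp only [LinearMap.sub_apply, coe_coe, map_sub, inner_sub_right] at hcorner
  rw [hz, sub_apply, mul_apply_eq_comp, mul_apply_eq_comp, inner_sub_right, inner_sub_right]
  linear_combination hcorner

theorem exists_inner_apply_eq (η ζ : H) :
    ∃ a : H →L[ℂ] H, ∀ z, ⟪ζ, Φ z η⟫_ℂ = ⟪ζ, (a * z - z * a) η⟫_ℂ := by
  obtain ⟨a, ha, -⟩ := hΦ (rankOne ℂ η ζ) (rankOne ℂ η ζ)
  refine ⟨a, fun z => ?_⟩
  rcases eq_or_ne η 0 with rfl | hη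
  · simp
  rcases eq_or_ne ζ 0 with rfl | hζ
  · simp
  simpa using hΦ.inner_apply_eq a.toLinearMap (inner_self_ne_zero.2 hζ)
    (inner_self_ne_zero.2 hη) (by simp [ha]) (fun w => by simp [ha]) z

theorem map_add (x y : H →L[ℂ] H) : Φ (x + y) = Φ x + Φ y := by
  ext η
  refine ext_inner_left ℂ fun ζ => ?_
  obtain ⟨a, ha⟩ := hΦ.exists_inner_apply_eq η ζ
  simp only [add_apply, inner_add_right, ha, mul_add, add_mul, sub_apply, inner_sub_right]
  ring

theorem map_sub (x y : H →L[ℂ] H) : Φ (x - y) = Φ x - Φ y := by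
  rw [eq_sub_iff_add_eq, ← hΦ.map_add, sub_add_cancel]

theorem map_smul (c : ℂ) (x : H →L[ℂ] H) : Φ (c • x) = c • Φ x := by
  obtain ⟨a, hx, hcx⟩ := hΦ x (c • x)
  rw [hcx, hx, mul_smul_comm, smul_mul_assoc, smul_sub]

theorem sub_commutator (a₀ : H →L[ℂ] H) :
    IsTwoLocalInnerDerivation fun x => Φ x - (a₀ * x - x * a₀) := fun x y => by
  obtain ⟨a, hx, hy⟩ := hΦ x y
  refine ⟨a - a₀, ?_, ?_⟩ <;> simp only [hx, hy, sub_mul, mul_sub] <;> abel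

theorem inner_apply_rankOne_eq_neg (η ζ η' ζ' : H) :
    ⟪ζ', Φ (rankOne ℂ η ζ) η'⟫_ℂ = -⟪ζ, Φ (rankOne ℂ η' ζ') η⟫_ℂ := by
  obtain ⟨a, h, h'⟩ := hΦ (rankOne ℂ η ζ) (rankOne ℂ η' ζ')
  simp only [h, h', sub_apply, mul_apply_eq_comp, rankOne_apply, _root_.map_smul, inner_sub_right,
    inner_smul_right]
  ring

theorem apply_mul_eq_zero {p x : H →L[ℂ] H} (hp : Φ p = 0) (hx : x * p = 0) :
    Φ x * p = 0 := by
  obtain ⟨a, ha, hpa⟩ := hΦ x p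
  have hcomm : a * p = p * a := by rw [← sub_eq_zero, ← hpa, hp]
  rw [ha, sub_mul, mul_assoc, hx, mul_assoc, hcomm, ← mul_assoc, hx]
  simp

theorem mul_apply_eq_zero {p x : H →L[ℂ] H} (hp : Φ p = 0) (hx : p * x = 0) :
    p * Φ x = 0 := by
  obtain ⟨a, ha, hpa⟩ := hΦ x p
  have hcomm : a * p = p * a := by rw [← sub_eq_zero, ← hpa, hp]
  rw [ha, mul_sub, ← mul_assoc, ← hcomm, mul_assoc, hx, ← mul_assoc, hx]
  simp

theorem apply_mul_eq_of_isIdempotentElem {p : H →L[ℂ] H} (hp : IsIdempotentElem p)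
    (hΦp : Φ p = 0) (x : H →L[ℂ] H) : Φ x * p = Φ (x * p) * p := by
  have h := hΦ.apply_mul_eq_zero hΦp (x := x - x * p)
    (by rw [sub_mul, mul_assoc, hp.eq, sub_self])
  rw [← sub_eq_zero, ← sub_mul, ← hΦ.map_sub, h]

theorem mul_apply_eq_of_isIdempotentElem {p : H →L[ℂ] H} (hp : IsIdempotentElem p)
    (hΦp : Φ p = 0) (x : H →L[ℂ] H) : p * Φ x = p * Φ (p * x) := by
  have h := hΦ.mul_apply_eq_zero hΦp (x := x - p * x)
    (by rw [mul_sub, ← mul_assoc, hp.eq, sub_self])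
  rw [← sub_eq_zero, ← mul_sub, ← hΦ.map_sub, h]

/-- If `Φ = [T, ·]` with `T ξ = 0`, this recovers `T`. -/
noncomputable def generator (ξ : H) : H →ₗ[ℂ] H where
  toFun η := Φ (rankOne ℂ η ξ) ξ
  map_add' η η' := by rw [_root_.map_add, add_apply, hΦ.map_add, add_apply]
  map_smul' c η := by rw [_root_.map_smul, smul_apply, hΦ.map_smul, smul_apply]; rfl

theorem generator_apply (ξ η : H) : hΦ.generator ξ η = Φ (rankOne ℂ η ξ) ξ := rfl

theorem generator_self {ξ : H} (hp : Φ (rankOne ℂ ξ ξ) = 0) : hΦ.generator ξ ξ = 0 := by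
  rw [generator_apply, hp, zero_apply]

section Normalized

variable {ξ : H} (hξ : ‖ξ‖ = 1) (hp : Φ (rankOne ℂ ξ ξ) = 0)
include hξ hp

theorem apply_self_eq_generator (z : H →L[ℂ] H) : Φ z ξ = hΦ.generator ξ (z ξ) := by
  have hpξ : rankOne ℂ ξ ξ ξ = ξ := by simp [hξ]
  calc Φ z ξ = (Φ z * rankOne ℂ ξ ξ) ξ := by rw [mul_apply_eq_comp, hpξ]
    _ = (Φ (z * rankOne ℂ ξ ξ) * rankOne ℂ ξ ξ) ξ := by
      rw [hΦ.apply_mul_eq_of_isIdempotentElem (isIdempotentElem_rankOne_self hξ) hp]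
    _ = hΦ.generator ξ (z ξ) := by rw [mul_apply_eq_comp, hpξ, mul_def, comp_rankOne]; rfl

theorem inner_self_apply_eq_neg [CompleteSpace H] (z : H →L[ℂ] H) (w : H) :
    ⟪ξ, Φ z w⟫_ℂ = -⟪ξ, z (hΦ.generator ξ w)⟫_ℂ := by
  have hpξ : ∀ u, ⟪ξ, rankOne ℂ ξ ξ u⟫_ℂ = ⟪ξ, u⟫_ℂ := by simp [hξ]
  calc ⟪ξ, Φ z w⟫_ℂ = ⟪ξ, (rankOne ℂ ξ ξ * Φ z) w⟫_ℂ := by rw [mul_apply_eq_comp, hpξ]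
    _ = ⟪ξ, (rankOne ℂ ξ ξ * Φ (rankOne ℂ ξ ξ * z)) w⟫_ℂ := by
      rw [hΦ.mul_apply_eq_of_isIdempotentElem (isIdempotentElem_rankOne_self hξ) hp]
    _ = ⟪ξ, Φ (rankOne ℂ ξ (adjoint z ξ)) w⟫_ℂ := by
      rw [mul_apply_eq_comp, hpξ, mul_def, rankOne_comp]
    _ = -⟪adjoint z ξ, hΦ.generator ξ w⟫_ℂ := hΦ.inner_apply_rankOne_eq_neg _ _ _ _
    _ = -⟪ξ, z (hΦ.generator ξ w)⟫_ℂ := by rw [adjoint_inner_left]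

theorem inner_self_generator [CompleteSpace H] (w : H) : ⟪ξ, hΦ.generator ξ w⟫_ℂ = 0 := by
  have h := hΦ.inner_self_apply_eq_neg hξ hp (rankOne ℂ w ξ) ξ
  rw [hΦ.generator_self hp, map_zero, inner_zero_right, neg_zero] at h
  exact h

theorem inner_apply_eq_generator [CompleteSpace H] {η ζ : H} (hη : ⟪ξ, η⟫_ℂ ≠ 0)
    (hζ : ⟪ζ, ξ⟫_ℂ ≠ 0) (z : H →L[ℂ] H) :
    ⟪ζ, Φ z η⟫_ℂ = ⟪ζ, hΦ.generator ξ (z η) - z (hΦ.generator ξ η)⟫_ℂ :=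
  hΦ.inner_apply_eq _ hζ hη
    (by rw [hΦ.apply_self_eq_generator hξ hp, hΦ.generator_self hp, map_zero, sub_zero])
    (fun w => by
      rw [hΦ.inner_self_apply_eq_neg hξ hp, inner_sub_right, hΦ.inner_self_generator hξ hp,
        zero_sub])
    z

theorem apply_eq_generator [CompleteSpace H] (z : H →L[ℂ] H) (v : H) :
    Φ z v = hΦ.generator ξ (z v) - z (hΦ.generator ξ v) := by
  set B := hΦ.generator ξ
  let E : H →ₗ[ℂ] H := (Φ z).toLinearMap - (B ∘ₗ z.toLinearMap - z.toLinearMap ∘ₗ B)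
  have hE : ∀ η, E η = Φ z η - (B (z η) - z (B η)) := fun _ => rfl
  have hξ0 : ξ ≠ 0 := norm_ne_zero_iff.1 (by simp [hξ])
  suffices E = 0 by simpa [hE, sub_eq_zero] using congr($this v)
  refine LinearMap.eq_zero_of_forall_inner_ne_zero hξ0 E fun η hη => ?_
  have hEη : innerₛₗ ℂ (E η) = 0 :=
    LinearMap.eq_zero_of_forall_inner_ne_zero hξ0 _ fun ζ hζ => by
      rw [innerₛₗ_apply_apply, inner_eq_zero_symm, hE, inner_sub_right, sub_eq_zero]
      exact hΦ.inner_apply_eq_generator hξ hp hη (inner_eq_zero_symm.not.1 hζ) z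
  simpa using LinearMap.congr_fun hEη (E η)

end Normalized

theorem exists_eq_commutator [CompleteSpace H] : ∃ a : H →L[ℂ] H, ∀ z, Φ z = a * z - z * a := by
  rcases subsingleton_or_nontrivial H with _ | _
  · exact ⟨0, fun _ => Subsingleton.elim _ _⟩
  obtain ⟨ξ, hξ⟩ := exists_norm_eq H zero_le_one
  obtain ⟨a₀, ha₀, -⟩ := hΦ (rankOne ℂ ξ ξ) (rankOne ℂ ξ ξ)
  have hΨ := hΦ.sub_commutator a₀
  obtain ⟨a₁, ha₁⟩ :=
    exists_eq_commutator_of_apply_eq _ (hΨ.apply_eq_generator hξ (by simp [ha₀]))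
  refine ⟨a₁ + a₀, fun z => ?_⟩
  rw [sub_eq_iff_eq_add.1 (ha₁ z), add_mul, mul_add]
  abel

end IsTwoLocalInnerDerivation

end

theorem twoLocalDerivation_is_inner_general
    {H : Type*} [NormedAddCommGroup H] [InnerProductSpace ℂ H] [CompleteSpace H]
    (Δ : (H →L[ℂ] H) → (H →L[ℂ] H))
    (h : ∀ x y : H →L[ℂ] H, ∃ D : (H →L[ℂ] H) →ₗ[ℂ] (H →L[ℂ] H),
      (∀ a b : H →L[ℂ] H, D (a * b) = D a * b + a * D b) ∧
      Δ x = D x ∧ Δ y = D y) :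
    ∃ a : H →L[ℂ] H, ∀ x : H →L[ℂ] H, Δ x = a * x - x * a := by
  refine IsTwoLocalInnerDerivation.exists_eq_commutator fun x y => ?_
  obtain ⟨D, hD, hx, hy⟩ := h x y
  obtain ⟨a, ha⟩ := exists_eq_commutator_of_derivation D hD
  exact ⟨a, hx.trans (ha x), hy.trans (ha y)⟩

/-- Every 2-local derivation on B(H), for H an infinite-dimensional complex
Hilbert space, is an inner derivation. -/
theorem twoLocalDerivation_is_inner
    {H : Type*} [NormedAddCommGroup H] [InnerProductSpace ℂ H] [CompleteSpace H]
    (hH : ¬ FiniteDimensional ℂ H)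
    (Δ : (H →L[ℂ] H) → (H →L[ℂ] H))
    (h : ∀ x y : H →L[ℂ] H, ∃ D : (H →L[ℂ] H) →ₗ[ℂ] (H →L[ℂ] H),
      (∀ a b : H →L[ℂ] H, D (a * b) = D a * b + a * D b) ∧
      Δ x = D x ∧ Δ y = D y) :
    ∃ a : H →L[ℂ] H, ∀ x : H →L[ℂ] H, Δ x = a * x - x * a :=
  twoLocalDerivation_is_inner_general Δ h
end
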